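/- arXiv:1405.0122 — 3 statements merged into one kernel-verified Lean document; each statement's English description precedes it below -/
import Mathlib

section
/- Let 0 < d₀ < d, h > 0, p = √(d² + h²) − h, and κ = (d − d₀)/d. For any r with d₀ < r < d, the value u = (r² − p²)/(2p) satisfies h − κ(√(d² + h²) + h) < u < h. -/
theorem stmt_2 (d₀ d h r : ℝ) (hd0 : 0 < d₀) (hdd : d₀ < d) (hh : 0 < h)
    (hr1 : d₀ < r) (hr2 : r < d) :
    let p := Real.sqrt (d ^ 2 + h ^ 2) - h
    let κ := (d - d₀) / d
    let u := (r ^ 2 - p ^ 2) / (2 * p)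
    h - κ * (Real.sqrt (d ^ 2 + h ^ 2) + h) < u ∧ u < h := by
  intro p κ u
  have hd : 0 < d := lt_trans hd0 hdd
  have hs2 : Real.sqrt (d ^ 2 + h ^ 2) ^ 2 = d ^ 2 + h ^ 2 :=
    Real.sq_sqrt (by positivity)
  have hsh : h < Real.sqrt (d ^ 2 + h ^ 2) := by
    nlinarith [Real.sqrt_nonneg (d ^ 2 + h ^ 2), sq_nonneg d]
  have hp : 0 < p := by simp only [p]; linarith
  have hkey : p * (Real.sqrt (d ^ 2 + h ^ 2) + h) = d ^ 2 := by
    simp only [p]; nlinarith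
  constructor
  · show h - κ * _ < (r ^ 2 - p ^ 2) / (2 * p)
    rw [lt_div_iff₀ (by linarith : (0:ℝ) < 2 * p)]
    have hκ : κ * d = d - d₀ := by
      simp only [κ]; field_simp
    have hpd : p = Real.sqrt (d ^ 2 + h ^ 2) - h := rfl
    have h2 : κ * (Real.sqrt (d ^ 2 + h ^ 2) + h) * (2 * p) = 2 * (d - d₀) * d := by
      have e : κ * (Real.sqrt (d ^ 2 + h ^ 2) + h) * (2 * p)
          = 2 * κ * (p * (Real.sqrt (d ^ 2 + h ^ 2) + h)) := by ring
      rw [e, hkey]; linear_combination 2 * d * hκ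
    nlinarith [h2, hpd, hkey, sq_nonneg (d - d₀),
      mul_pos (sub_pos.mpr hr1) (by linarith : (0:ℝ) < r + d₀)]
  · show (r ^ 2 - p ^ 2) / (2 * p) < h
    rw [div_lt_iff₀ (by linarith : (0:ℝ) < 2 * p)]
    have hpd : p = Real.sqrt (d ^ 2 + h ^ 2) - h := rfl
    nlinarith [hpd]
end

section
/- Let 0 < d₀ < d, h > 0, p = √(d² + h²) − h, κ = (d − d₀)/d. For any r with d₀ < r < d, setting g = r/p (the gradient magnitude), one has (1/2)(1 − h/√(d² + h²)) < 1/(1 + g²) < ((1 − κ)⁻²/2)(1 − h/√(d² + h²)). -/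
/-!
Put `s = √(d² + h²)` and `p = s - h`. Since `s² - h² = d²`, one has `p² + d² = 2ps`, hence
`(1 - h/s)/2 = p/(2s) = 1/(1 + (d/p)²)`: the left-hand bound is `1/(1 + g²)` evaluated at `r = d`.
The lower bound is then monotonicity of `r ↦ 1/(1 + (r/p)²)`, and, as `(1 - κ)⁻¹ = d/d₀`, the upper
bound follows from `d₀² (1 + (d/p)²) < d² (1 + (r/p)²)`.
-/

namespace Real

theorem sq_add_sq_sqrt_sub_eq (d h : ℝ) :
    (√(d ^ 2 + h ^ 2) - h) ^ 2 + d ^ 2 = 2 * (√(d ^ 2 + h ^ 2) - h) * √(d ^ 2 + h ^ 2) := by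
  have hs : √(d ^ 2 + h ^ 2) ^ 2 = d ^ 2 + h ^ 2 := sq_sqrt (by positivity)
  linear_combination -hs

theorem sqrt_sq_add_sq_sub_pos {d : ℝ} (hd : d ≠ 0) (h : ℝ) : 0 < √(d ^ 2 + h ^ 2) - h := by
  have : h < √(d ^ 2 + h ^ 2) :=
    lt_sqrt_of_sq_lt (by linarith [sq_pos_of_ne_zero hd])
  linarith

theorem half_one_sub_div_sqrt_eq {d : ℝ} (hd : d ≠ 0) (h : ℝ) :
    1 / 2 * (1 - h / √(d ^ 2 + h ^ 2)) = 1 / (1 + (d / (√(d ^ 2 + h ^ 2) - h)) ^ 2) := by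
  have hp := sqrt_sq_add_sq_sub_pos hd h
  have hs : 0 < √(d ^ 2 + h ^ 2) := sqrt_pos.mpr (by positivity)
  have key := sq_add_sq_sqrt_sub_eq d h
  field_simp
  linear_combination key

end Real

theorem one_div_one_add_sq_div_lt_one_div_one_add_sq_div {a b : ℝ} (ha : 0 ≤ a) (hab : a < b)
    {p : ℝ} (hp : p ≠ 0) : 1 / (1 + (b / p) ^ 2) < 1 / (1 + (a / p) ^ 2) := by
  have : (a / p) ^ 2 < (b / p) ^ 2 := by
    rw [div_pow, div_pow]
    exact div_lt_div_of_pos_right (pow_lt_pow_left₀ hab ha two_ne_zero) (by positivity)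
  exact one_div_lt_one_div_of_lt (by positivity) (by linarith)

theorem one_div_one_add_sq_div_lt_sq_div_mul {d₀ d r : ℝ} (hd₀ : 0 < d₀) (hd : d₀ < d)
    (hr : d₀ < r) (p : ℝ) :
    1 / (1 + (r / p) ^ 2) < (d / d₀) ^ 2 * (1 / (1 + (d / p) ^ 2)) := by
  have hsq : d₀ ^ 2 < d ^ 2 := pow_lt_pow_left₀ hd hd₀.le two_ne_zero
  have hmul : d₀ ^ 2 * (d / p) ^ 2 ≤ d ^ 2 * (r / p) ^ 2 := by
    have : (d₀ * d) ^ 2 ≤ (d * r) ^ 2 :=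
      pow_le_pow_left₀ (mul_pos hd₀ (hd₀.trans hd)).le (by nlinarith) 2
    calc d₀ ^ 2 * (d / p) ^ 2 = (d₀ * d) ^ 2 / p ^ 2 := by ring
      _ ≤ (d * r) ^ 2 / p ^ 2 := div_le_div_of_nonneg_right this (by positivity)
      _ = d ^ 2 * (r / p) ^ 2 := by ring
  rw [div_pow d d₀, mul_one_div, div_div, div_lt_div_iff₀ (by positivity) (by positivity)]
  nlinarith

theorem stmt_3_general (d₀ d h r : ℝ) (hd0 : 0 < d₀) (hdd : d₀ < d)
    (hr1 : d₀ < r) (hr2 : r < d) :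
    let p := Real.sqrt (d ^ 2 + h ^ 2) - h
    let κ := (d - d₀) / d
    let g := r / p
    (1 / 2) * (1 - h / Real.sqrt (d ^ 2 + h ^ 2)) < 1 / (1 + g ^ 2) ∧
      1 / (1 + g ^ 2) < ((1 - κ)⁻¹ ^ 2 / 2) * (1 - h / Real.sqrt (d ^ 2 + h ^ 2)) := by
  intro p κ g
  have hd : d ≠ 0 := (hd0.trans hdd).ne'
  have hκ : (1 - κ)⁻¹ = d / d₀ := by
    rw [show 1 - κ = d₀ / d by simp only [κ]; field_simp; ring, inv_div]
  have hrhs : (1 - κ)⁻¹ ^ 2 / 2 * (1 - h / √(d ^ 2 + h ^ 2))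
      = (d / d₀) ^ 2 * (1 / 2 * (1 - h / √(d ^ 2 + h ^ 2))) := by
    rw [hκ]; ring
  rw [hrhs, Real.half_one_sub_div_sqrt_eq hd]
  exact ⟨one_div_one_add_sq_div_lt_one_div_one_add_sq_div (hd0.trans hr1).le hr2
      (Real.sqrt_sq_add_sq_sub_pos hd h).ne',
    one_div_one_add_sq_div_lt_sq_div_mul hd0 hdd hr1 p⟩

theorem stmt_3 (d₀ d h r : ℝ) (hd0 : 0 < d₀) (hdd : d₀ < d) (hh : 0 < h)
    (hr1 : d₀ < r) (hr2 : r < d) :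
    let p := Real.sqrt (d ^ 2 + h ^ 2) - h
    let κ := (d - d₀) / d
    let g := r / p
    (1 / 2) * (1 - h / Real.sqrt (d ^ 2 + h ^ 2)) < 1 / (1 + g ^ 2) ∧
      1 / (1 + g ^ 2) < ((1 - κ)⁻¹ ^ 2 / 2) * (1 - h / Real.sqrt (d ^ 2 + h ^ 2)) :=
  stmt_3_general d₀ d h r hd0 hdd hr1 hr2
end

section
/- For the unit disc, M² · φ(Ω₀, M) = M² · π ∫₀¹ (1 − M/√(M² + (1−r)²)) r dr tends to π/24 as M → ∞. -/
open Filter Topology Real MeasureTheory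

/-!
With `x = M / √(M ^ 2 + s ^ 2) ∈ [0, 1]` one has `1 - x ^ 2 = s ^ 2 / (M ^ 2 + s ^ 2)`, hence
`M ^ 2 * (1 - x) = s ^ 2 * x ^ 2 / (1 + x)`. As `x → 1` this tends to `s ^ 2 / 2`, and it never
exceeds `s ^ 2 / 2`, so dominated convergence gives
`M ^ 2 * φ(Ω₀, M) → π * ∫₀¹ (1 - r) ^ 2 / 2 * r dr = π / 24`.
-/

lemma sq_mul_one_sub_div_sqrt_eq {M : ℝ} (hM : 0 ≤ M) (s : ℝ) :
    M ^ 2 * (1 - M / √(M ^ 2 + s ^ 2)) =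
      s ^ 2 * ((M / √(M ^ 2 + s ^ 2)) ^ 2 / (1 + M / √(M ^ 2 + s ^ 2))) := by
  have hq : √(M ^ 2 + s ^ 2) ^ 2 = M ^ 2 + s ^ 2 := sq_sqrt (by positivity)
  have hq0 := sqrt_nonneg (M ^ 2 + s ^ 2)
  generalize √(M ^ 2 + s ^ 2) = q at hq hq0
  rcases hq0.eq_or_lt with rfl | hq0
  · have : M = 0 := by nlinarith [sq_nonneg s]
    simp [this]
  field_simp
  linear_combination M ^ 2 * hq

lemma div_sqrt_sq_add_sq_le_one (M s : ℝ) : M / √(M ^ 2 + s ^ 2) ≤ 1 := by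
  rcases (sqrt_nonneg (M ^ 2 + s ^ 2)).eq_or_lt with hq0 | hq0
  · rw [← hq0]; simp
  rw [div_le_one hq0]
  exact (le_abs_self M).trans (sqrt_sq_eq_abs M ▸ sqrt_le_sqrt (by nlinarith [sq_nonneg s]))

lemma sq_mul_one_sub_div_sqrt_nonneg (M s : ℝ) :
    0 ≤ M ^ 2 * (1 - M / √(M ^ 2 + s ^ 2)) :=
  mul_nonneg (sq_nonneg M) (sub_nonneg.2 (div_sqrt_sq_add_sq_le_one M s))

lemma sq_mul_one_sub_div_sqrt_le {M : ℝ} (hM : 0 ≤ M) (s : ℝ) :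
    M ^ 2 * (1 - M / √(M ^ 2 + s ^ 2)) ≤ s ^ 2 / 2 := by
  rw [sq_mul_one_sub_div_sqrt_eq hM]
  have hx0 : 0 ≤ M / √(M ^ 2 + s ^ 2) := by positivity
  have hx1 := div_sqrt_sq_add_sq_le_one M s
  have hx : (M / √(M ^ 2 + s ^ 2)) ^ 2 / (1 + M / √(M ^ 2 + s ^ 2)) ≤ 1 / 2 := by
    rw [div_le_iff₀ (by positivity)]; nlinarith
  calc _ ≤ s ^ 2 * (1 / 2) := mul_le_mul_of_nonneg_left hx (sq_nonneg s)
    _ = s ^ 2 / 2 := by ring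

lemma tendsto_div_sqrt_sq_add_sq (s : ℝ) :
    Tendsto (fun M : ℝ => M / √(M ^ 2 + s ^ 2)) atTop (𝓝 1) := by
  have hcont : Continuous fun t : ℝ => (√(1 + t ^ 2))⁻¹ :=
    (continuous_const.add (continuous_pow 2)).sqrt.inv₀ fun t =>
      (sqrt_pos.2 (by positivity : (0 : ℝ) < 1 + t ^ 2)).ne'
  have h := (hcont.tendsto 0).comp (by simpa using tendsto_inv_atTop_zero.const_mul s)
  simp only [Function.comp_def] at h
  norm_num at h
  refine h.congr' ?_
  filter_upwards [eventually_gt_atTop 0] with M hM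
  rw [show M ^ 2 + s ^ 2 = M ^ 2 * (1 + (s * M⁻¹) ^ 2) by field_simp, sqrt_mul (sq_nonneg M),
    sqrt_sq hM.le]
  field_simp

lemma tendsto_sq_mul_one_sub_div_sqrt (s : ℝ) :
    Tendsto (fun M : ℝ => M ^ 2 * (1 - M / √(M ^ 2 + s ^ 2))) atTop (𝓝 (s ^ 2 / 2)) := by
  have hcont : ContinuousAt (fun x : ℝ => s ^ 2 * (x ^ 2 / (1 + x))) 1 := by
    fun_prop (disch := norm_num)
  have h := hcont.tendsto.comp (tendsto_div_sqrt_sq_add_sq s)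
  rw [show s ^ 2 * (1 ^ 2 / (1 + 1)) = s ^ 2 / 2 by ring] at h
  refine h.congr' ?_
  filter_upwards [eventually_ge_atTop 0] with M hM
  exact (sq_mul_one_sub_div_sqrt_eq hM s).symm

lemma tendsto_intervalIntegral_sq_mul_one_sub_div_sqrt {s w : ℝ → ℝ} (hs : Continuous s)
    (hw : Continuous w) (a b : ℝ) :
    Tendsto (fun M : ℝ => ∫ r in a..b, M ^ 2 * (1 - M / √(M ^ 2 + s r ^ 2)) * w r) atTop
      (𝓝 (∫ r in a..b, s r ^ 2 / 2 * w r)) := by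
  refine intervalIntegral.tendsto_integral_filter_of_dominated_convergence
    (fun r => s r ^ 2 / 2 * |w r|) (Eventually.of_forall fun M => ?_) ?_
    ((by fun_prop : Continuous _).intervalIntegrable _ _) (ae_of_all _ fun r _ => ?_)
  · exact (by fun_prop : Measurable _).aestronglyMeasurable
  · filter_upwards [eventually_ge_atTop 0] with M hM
    refine ae_of_all _ fun r _ => ?_
    rw [norm_mul, Real.norm_of_nonneg (sq_mul_one_sub_div_sqrt_nonneg M (s r)), norm_eq_abs]
    exact mul_le_mul_of_nonneg_right (sq_mul_one_sub_div_sqrt_le hM (s r)) (abs_nonneg _)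
  · exact (tendsto_sq_mul_one_sub_div_sqrt (s r)).mul_const (w r)

lemma integral_one_sub_sq_div_two_mul_self :
    ∫ r in (0 : ℝ)..1, (1 - r) ^ 2 / 2 * r = 1 / 24 := by
  have : ∀ r : ℝ, (1 - r) ^ 2 / 2 * r = r / 2 - r ^ 2 + r ^ 3 / 2 := fun r => by ring
  simp only [this]
  rw [intervalIntegral.integral_add, intervalIntegral.integral_sub, intervalIntegral.integral_div,
    intervalIntegral.integral_div] <;> norm_num

theorem stmt_14 :
    Tendsto (fun M : ℝ =>
        M ^ 2 * (Real.pi * ∫ r in (0:ℝ)..1, (1 - M / Real.sqrt (M ^ 2 + (1 - r) ^ 2)) * r))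
      atTop (nhds (Real.pi / 24)) := by
  have h := (tendsto_intervalIntegral_sq_mul_one_sub_div_sqrt (s := fun r => 1 - r)
    (w := fun r => r) (by fun_prop) (by fun_prop) 0 1).const_mul π
  rw [integral_one_sub_sq_div_two_mul_self] at h
  convert h using 2 with M
  · simp only [mul_assoc, intervalIntegral.integral_const_mul]; ring
  · ring
end
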